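/- In the lattice T_{2,3,8} (the rank-10 hyperbolic lattice with Dynkin-type bilinear form of the T_{2,3,8} graph), the six elements j(l') = l', j(e_1) = e_1 + 2(e_2+...+e_8) + e_9 + e_10, j(e_2) = e_3 + 2(e_4+...+e_8) + e_9 + e_10, j(e_3) = e_5 + 2(e_6+e_7+e_8) + e_9 + e_10, j(e_4) = e_7 + 2e_8 + e_9 + e_10, j(e_5) = e_9 satisfy the Gram relations of M: each has square -2, j(l')·j(e_i) = 1 for all i, and j(e_i)·j(e_j) = 0 for i ≠ j. Hence they define a lattice embedding M ↪ T_{2,3,8}. -/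
import Mathlib


open Matrix BigOperators

/-- Gram matrix of the rank 6 lattice `M` with basis `l', e₁, …, e₅`:
`l'² = eᵢ² = -2`, `l'·eᵢ = 1`, `eᵢ·eⱼ = 0` for `i ≠ j`.
Index `0` corresponds to `l'` and index `i.succ` to `eᵢ`. -/
def Mgram : Matrix (Fin 6) (Fin 6) ℤ :=
  fun i j => if i = j then -2 else if i = 0 ∨ j = 0 then 1 else 0

/-- The bilinear form of the lattice `M`. -/
def bM (x y : Fin 6 → ℤ) : ℤ := x ⬝ᵥ (Mgram.mulVec y)

/-- The basis vector `l'`. -/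
def lvec : Fin 6 → ℤ := fun j => if j = 0 then 1 else 0

/-- The basis vector `eᵢ`. -/
def ev (i : Fin 5) : Fin 6 → ℤ := fun j => if j = i.succ then 1 else 0

/-- The element `h = 2l' + e₁ + ⋯ + e₅`. -/
def hv : Fin 6 → ℤ := fun j => if j = 0 then 2 else 1

/-- The Gram matrix of the lattice `T_{2,3,8}` with basis `l', e₁, …, e₁₀`
(index `0` for `l'`, index `i` for `eᵢ`): each basis vector has square `-2`,
and two basis vectors pair to `1` exactly when joined in the `T_{2,3,8}` tree:
the chain `l' — e₉ — e₈ — e₇ — e₆ — e₅ — e₄ — e₃ — e₂ — e₁` together with the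
extra node `e₁₀` attached to `e₈`. -/
def T238gram : Matrix (Fin 11) (Fin 11) ℤ :=
  fun i j =>
    if i = j then -2
    else if ((i, j) ∈ ([(0,9),(9,8),(8,7),(7,6),(6,5),(5,4),(4,3),(3,2),(2,1),(10,8)] :
        List (Fin 11 × Fin 11)) ∨
      (j, i) ∈ ([(0,9),(9,8),(8,7),(7,6),(6,5),(5,4),(4,3),(3,2),(2,1),(10,8)] :
        List (Fin 11 × Fin 11))) then 1 else 0

/-- The bilinear form of `T_{2,3,8}`. -/
def bT (x y : Fin 11 → ℤ) : ℤ := x ⬝ᵥ (T238gram.mulVec y)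

/-- The six vectors `j(l') = l'`, `j(e₁) = e₁ + 2(e₂+⋯+e₈) + e₉ + e₁₀`,
`j(e₂) = e₃ + 2(e₄+⋯+e₈) + e₉ + e₁₀`, `j(e₃) = e₅ + 2(e₆+e₇+e₈) + e₉ + e₁₀`,
`j(e₄) = e₇ + 2e₈ + e₉ + e₁₀`, `j(e₅) = e₉` in `T_{2,3,8}`. -/
def Jvec : Fin 6 → Fin 11 → ℤ :=
  ![![1, 0, 0, 0, 0, 0, 0, 0, 0, 0, 0],
    ![0, 1, 2, 2, 2, 2, 2, 2, 2, 1, 1],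
    ![0, 0, 0, 1, 2, 2, 2, 2, 2, 1, 1],
    ![0, 0, 0, 0, 0, 1, 2, 2, 2, 1, 1],
    ![0, 0, 0, 0, 0, 0, 0, 1, 2, 1, 1],
    ![0, 0, 0, 0, 0, 0, 0, 0, 0, 1, 0]]

/-- The standard basis element of `M` numbered `i` (`0 ↦ l'`, `i.succ ↦ eᵢ`). -/
def stdM (i : Fin 6) : Fin 6 → ℤ := fun j => if j = i then 1 else 0


/-- The matrix whose columns are the `Jvec`s. -/
def Amat : Matrix (Fin 11) (Fin 6) ℤ := fun k i => Jvec i k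

lemma gram_eq : Amat.transpose * (T238gram * Amat) = Mgram := by
  decide

lemma Amat_mulVec_std (i : Fin 6) : Amat.mulVec (stdM i) = Jvec i := by
  funext k
  have : stdM i = Pi.single i 1 := by
    funext j; simp [stdM, Pi.single_apply]
  rw [this, Matrix.mulVec_single]
  simp [Amat]

/-- The six vectors `Jvec` satisfy the Gram relations of the lattice `M`:
each has square `-2`, `j(l')·j(eᵢ) = 1` and `j(eᵢ)·j(eⱼ) = 0` for `i ≠ j`;
hence they define a lattice embedding `M ↪ T_{2,3,8}`. -/
theorem M_embeds_in_T238 :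
    (∀ i : Fin 6, bT (Jvec i) (Jvec i) = -2) ∧
    (∀ i : Fin 5, bT (Jvec 0) (Jvec i.succ) = 1) ∧
    (∀ i j : Fin 5, i ≠ j → bT (Jvec i.succ) (Jvec j.succ) = 0) ∧
    ∃ φ : (Fin 6 → ℤ) →ₗ[ℤ] (Fin 11 → ℤ),
      Function.Injective φ ∧
      (∀ v w : Fin 6 → ℤ, bT (φ v) (φ w) = bM v w) ∧
      (∀ i : Fin 6, φ (stdM i) = Jvec i) := by
  refine ⟨by decide, by decide, by decide, Matrix.mulVecLin Amat, ?_, ?_, ?_⟩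
  · rw [injective_iff_map_eq_zero]
    intro v hv
    have h : ∀ k, Amat.mulVec v k = 0 := fun k => congrFun hv k
    have h0 := h 0; have h1 := h 1; have h3 := h 3; have h5 := h 5
    have h7 := h 7; have h9 := h 9
    have e : ∀ k i, Amat k i = Jvec i k := fun _ _ => rfl
    simp [Matrix.mulVec, dotProduct, Fin.sum_univ_six, e,
      show Jvec 0 0 = 1 from rfl, show Jvec 1 0 = 0 from rfl, show Jvec 2 0 = 0 from rfl, show Jvec 3 0 = 0 from rfl, show Jvec 4 0 = 0 from rfl, show Jvec 5 0 = 0 from rfl, show Jvec 0 1 = 0 from rfl, show Jvec 1 1 = 1 from rfl, show Jvec 2 1 = 0 from rfl, show Jvec 3 1 = 0 from rfl, show Jvec 4 1 = 0 from rfl, show Jvec 5 1 = 0 from rfl, show Jvec 0 3 = 0 from rfl, show Jvec 1 3 = 2 from rfl, show Jvec 2 3 = 1 from rfl, show Jvec 3 3 = 0 from rfl, show Jvec 4 3 = 0 from rfl, show Jvec 5 3 = 0 from rfl, show Jvec 0 5 = 0 from rfl, show Jvec 1 5 = 2 from rfl, show Jvec 2 5 = 2 from rfl, show Jvec 3 5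 = 1 from rfl, show Jvec 4 5 = 0 from rfl, show Jvec 5 5 = 0 from rfl, show Jvec 0 7 = 0 from rfl, show Jvec 1 7 = 2 from rfl, show Jvec 2 7 = 2 from rfl, show Jvec 3 7 = 2 from rfl, show Jvec 4 7 = 1 from rfl, show Jvec 5 7 = 0 from rfl, show Jvec 0 9 = 0 from rfl, show Jvec 1 9 = 1 from rfl, show Jvec 2 9 = 1 from rfl, show Jvec 3 9 = 1 from rfl, show Jvec 4 9 = 1 from rfl, show Jvec 5 9 = 1 from rfl] at h0 h1 h3 h5 h7 h9
    funext j
    fin_cases j <;> simp <;> omega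
  · intro v w
    simp only [Matrix.mulVecLin_apply, bT, bM]
    rw [Matrix.mulVec_mulVec, ← Matrix.vecMul_transpose, Matrix.dotProduct_mulVec,
      Matrix.vecMul_vecMul, ← Matrix.dotProduct_mulVec, ← Matrix.mulVec_mulVec]
    rw [Matrix.mulVec_mulVec, gram_eq]
  · intro i
    simpa using Amat_mulVec_std i
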